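/- Consider the game where players alternately pick previously unpicked elements of a finite set S, subject to the constraint that the set P of picked elements never contains all of a fixed nonempty subset W ⊆ S (i.e., W ⊄ P must hold after each move); the player unable to move loses. Then the first player wins if and only if |S| is even. Moreover the nim value of the game is 1 if |S| is even and 0 if |S| is odd. -/
import Mathlib


/-- Minimum excludant. -/
noncomputable def mex (A : Set ℕ) : ℕ := sInf {n | n ∉ A}

/-- Nim value of a position in the avoidance game with legality predicate `legal`. -/
noncomputable def nimVal {α : Type*} [Fintype α] [DecidableEq α]
    (legal : Finset α → Prop) (P : Finset α) : ℕ :=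
  mex {k | ∃ x, ∃ _ : x ∉ P, legal (insert x P) ∧ k = nimVal legal (insert x P)}
termination_by Pᶜ.card
decreasing_by
  simp only [Finset.compl_insert]
  exact Finset.card_erase_lt_of_mem (Finset.mem_compl.mpr (by assumption))

lemma mex_empty : mex (∅ : Set ℕ) = 0 :=
  Nat.sInf_eq_zero.mpr (Or.inl (by simp))

lemma mex_singleton_zero : mex ({0} : Set ℕ) = 1 := by
  have h1 : (1 : ℕ) ∈ {n | n ∉ ({0} : Set ℕ)} := by simp
  have hmem : sInf {n | n ∉ ({0} : Set ℕ)} ∈ {n | n ∉ ({0} : Set ℕ)} :=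
    Nat.sInf_mem ⟨1, h1⟩
  have hle : sInf {n | n ∉ ({0} : Set ℕ)} ≤ 1 := Nat.sInf_le h1
  have hne : sInf {n | n ∉ ({0} : Set ℕ)} ≠ 0 := by simpa using hmem
  unfold mex
  omega

lemma mex_singleton_one : mex ({1} : Set ℕ) = 0 :=
  Nat.sInf_eq_zero.mpr (Or.inl (by simp))

lemma key {α : Type*} [Fintype α] [DecidableEq α] (W : Finset α) (hW : W.Nonempty) :
    ∀ n (P : Finset α), Pᶜ.card = n → ¬ W ⊆ P →
      nimVal (fun Q : Finset α => ¬ W ⊆ Q) P = if Even n then 1 else 0 := by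
  intro n
  induction n using Nat.strong_induction_on with
  | _ n ih =>
    intro P hn hP
    obtain ⟨w, hwW, hwP⟩ : ∃ w ∈ W, w ∉ P := by
      by_contra h; push_neg at h; exact hP h
    have hw : w ∈ Pᶜ := Finset.mem_compl.mpr hwP
    have hn1 : 1 ≤ n := by
      rw [← hn]; exact Finset.card_pos.mpr ⟨w, hw⟩
    rw [nimVal]
    rcases eq_or_lt_of_le hn1 with h1 | h2
    · -- terminal position: Pᶜ = {w}, no legal moves
      obtain ⟨a, ha⟩ := Finset.card_eq_one.mp (hn.trans h1.symm)
      have haw : a = w := by rw [ha] at hw; exact (Finset.mem_singleton.mp hw).symm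
      subst haw
      have hset : {k | ∃ x, ∃ _ : x ∉ P, (¬ W ⊆ insert x P) ∧
          k = nimVal (fun Q : Finset α => ¬ W ⊆ Q) (insert x P)} = ∅ := by
        ext k
        simp only [Set.mem_setOf_eq, Set.mem_empty_iff_false, iff_false]
        rintro ⟨x, hx, hleg, -⟩
        have hxw : x = a := by
          have : x ∈ Pᶜ := Finset.mem_compl.mpr hx
          rw [ha] at this; simpa using this
        apply hleg
        intro y hy
        by_cases hyP : y ∈ P
        · exact Finset.mem_insert_of_mem hyP
        · have : y ∈ Pᶜ := Finset.mem_compl.mpr hyP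
          rw [ha] at this
          simp only [Finset.mem_singleton] at this
          rw [this, ← hxw]
          exact Finset.mem_insert_self _ _
      rw [hset, mex_empty, ← h1]
      simp
    · -- nonterminal: n ≥ 2; the option set is a singleton
      have exmove : ∃ x, x ∉ P ∧ ¬ W ⊆ insert x P := by
        have hlt : 1 < Pᶜ.card := hn ▸ h2
        obtain ⟨x, hx, hxw⟩ := Finset.exists_mem_ne hlt w
        refine ⟨x, Finset.mem_compl.mp hx, fun hsub => ?_⟩
        have := hsub hwW
        rw [Finset.mem_insert] at this
        rcases this with h | h
        · exact hxw h.symm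
        · exact hwP h
      have card_ins : ∀ x, x ∉ P → (insert x P)ᶜ.card = n - 1 := by
        intro x hx
        rw [Finset.compl_insert, Finset.card_erase_of_mem (Finset.mem_compl.mpr hx), hn]
      have hset : {k | ∃ x, ∃ _ : x ∉ P, (¬ W ⊆ insert x P) ∧
          k = nimVal (fun Q : Finset α => ¬ W ⊆ Q) (insert x P)} =
          {if Even (n - 1) then 1 else 0} := by
        ext k
        simp only [Set.mem_setOf_eq, Set.mem_singleton_iff]
        constructor
        · rintro ⟨x, hx, hleg, rfl⟩
          exact ih (n - 1) (by omega) _ (card_ins x hx) hleg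
        · rintro rfl
          obtain ⟨x, hx, hleg⟩ := exmove
          exact ⟨x, hx, hleg, (ih (n - 1) (by omega) _ (card_ins x hx) hleg).symm⟩
      rw [hset]
      rcases Nat.even_or_odd n with he | ho
      · have h' : ¬ Even (n - 1) := by
          rcases he with ⟨m, hm⟩
          rintro ⟨k, hk⟩; omega
        rw [if_neg h', mex_singleton_zero, if_pos he]
      · have h' : Even (n - 1) := by
          rcases ho with ⟨m, hm⟩
          exact ⟨m, by omega⟩
        rw [if_pos h', mex_singleton_one, if_neg (Nat.not_even_iff_odd.mpr ho)]

/-- In the game where players alternately pick unpicked elements of `S` subject to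
`W ⊄ P`, the first player wins iff `|S|` is even; the nim value is `1` if `|S|` is even
and `0` if `|S|` is odd. -/
theorem nim_of_subset_avoidance {α : Type*} [Fintype α] [DecidableEq α]
    (W : Finset α) (hW : W.Nonempty) :
    nimVal (fun P : Finset α => ¬ W ⊆ P) ∅ = (if Even (Fintype.card α) then 1 else 0) ∧
    (nimVal (fun P : Finset α => ¬ W ⊆ P) ∅ ≠ 0 ↔ Even (Fintype.card α)) := by
  have h := key W hW (Fintype.card α) ∅ (by simp) (by
    simpa [Finset.subset_empty, Finset.nonempty_iff_ne_empty] using hW.ne_empty)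
  refine ⟨h, ?_⟩
  rw [h]
  by_cases he : Even (Fintype.card α) <;> simp [he]
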